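/- Let n_1 ≥ 2, n_1' ≥ 1 and let B_1, C_1ᵀ ∈ ℝ^{n_1 × n_1'} satisfy B_1 C_1 = A^{(n_1)}. Then for every integer ℓ ≥ 1 there exist matrices B_ℓ, C_ℓᵀ ∈ ℝ^{n_ℓ × n_ℓ'}, where n_ℓ = n_1^ℓ and n_ℓ' = n_1' · Σ_{k=0}^{ℓ-1} n_1^k, such that B_ℓ C_ℓ = A^{(n_ℓ)}, ‖B_ℓ‖_{2→∞} ≤ sqrt(ℓ) · ‖B_1‖_{2→∞}, and ‖C_ℓ‖_{1→2} = sqrt(ℓ) · ‖C_1‖_{1→2}. -/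

import Mathlib

/-! Index `Fin (n * N)` lexicographically by `Fin n × Fin N`. Then
`A⁽ⁿᴺ⁾ = I ⊗ A⁽ᴺ⁾ + L ⊗ 𝟙𝟙ᵀ` with `L` the strictly lower triangular all-ones matrix, and
`L = S C₁` where `S` is `B₁` shifted down by one row. So if `B C = A⁽ᴺ⁾` then
`[I ⊗ B | S ⊗ 𝟙] * [I ⊗ C ; C₁ ⊗ 𝟙ᵀ] = A⁽ⁿᴺ⁾`. A row of the new left factor is a row of `B`
next to a row of `S`, and a column of the new right factor is a column of `C` on top of a
column of `C₁`; so each step adds `‖B₁‖²` to the squared row norm bound and exactly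
`‖C₁‖²` to the squared column norm, and `ℓ - 1` steps from `(B₁, C₁)` give the factor `√ℓ`. -/

/-- Maximum Euclidean row norm `‖M‖_{2→∞}`. -/
noncomputable def maxRowNorm {m n : Type*} [Fintype m] [Fintype n]
    (M : Matrix m n ℝ) : ℝ :=
  ⨆ i : m, Real.sqrt (∑ j, (M i j) ^ 2)

/-- Maximum Euclidean column norm `‖M‖_{1→2}`. -/
noncomputable def maxColNorm {m n : Type*} [Fintype m] [Fintype n]
    (M : Matrix m n ℝ) : ℝ :=
  ⨆ j : n, Real.sqrt (∑ i, (M i j) ^ 2)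

/-- The `n × n` lower triangular all-ones matrix. -/
def allOnesLT (n : ℕ) : Matrix (Fin n) (Fin n) ℝ :=
  Matrix.of fun i j => if (j : ℕ) ≤ (i : ℕ) then 1 else 0

open Matrix
open scoped Kronecker

section RowNorm

variable {m n : Type*} [Fintype m] [Fintype n]

lemma maxColNorm_eq_maxRowNorm_transpose (M : Matrix m n ℝ) :
    maxColNorm M = maxRowNorm Mᵀ :=
  rfl

lemma maxRowNorm_nonneg (M : Matrix m n ℝ) : 0 ≤ maxRowNorm M :=
  Real.iSup_nonneg fun _ => Real.sqrt_nonneg _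

lemma sqrt_sum_sq_le_maxRowNorm (M : Matrix m n ℝ) (i : m) :
    √(∑ j, M i j ^ 2) ≤ maxRowNorm M :=
  le_ciSup (f := fun i => √(∑ j, M i j ^ 2)) (Set.finite_range _).bddAbove i

lemma sum_sq_le_maxRowNorm_sq (M : Matrix m n ℝ) (i : m) :
    ∑ j, M i j ^ 2 ≤ maxRowNorm M ^ 2 :=
  (Real.sqrt_le_iff.mp (sqrt_sum_sq_le_maxRowNorm M i)).2

lemma maxRowNorm_le_of_sum_sq_le (M : Matrix m n ℝ) {c : ℝ} (hc : 0 ≤ c)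
    (h : ∀ i, ∑ j, M i j ^ 2 ≤ c ^ 2) : maxRowNorm M ≤ c :=
  Real.iSup_le (fun i => Real.sqrt_le_iff.mpr ⟨hc, h i⟩) hc

lemma exists_sqrt_sum_sq_eq_maxRowNorm [Nonempty m] (M : Matrix m n ℝ) :
    ∃ i, √(∑ j, M i j ^ 2) = maxRowNorm M :=
  exists_eq_ciSup_of_finite

lemma maxRowNorm_submatrix_equiv {m' n' : Type*} [Fintype m'] [Fintype n'] (M : Matrix m n ℝ)
    (e₁ : m' ≃ m) (e₂ : n' ≃ n) : maxRowNorm (M.submatrix e₁ e₂) = maxRowNorm M := by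
  unfold maxRowNorm
  rw [← e₁.iSup_comp]
  exact iSup_congr fun i => congrArg Real.sqrt (e₂.sum_comp fun j => M (e₁ i) j ^ 2)

end RowNorm

section TreeStep

variable {R : Type*} {α ι κ μ : Type*} [DecidableEq α]

/-- The block matrix `[I ⊗ U | V ⊗ 𝟙]`, `𝟙` the all-ones column indexed by `ι`. -/
def treeStep [Zero R] [One R] [Mul R] (U : Matrix ι κ R) (V : Matrix α μ R) :
    Matrix (α × ι) ((α × κ) ⊕ μ) R :=
  fromCols (1 ⊗ₖ U) (V.submatrix Prod.fst id)

variable [Fintype α] [Fintype κ] [Fintype μ]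

lemma treeStep_mul_transpose_treeStep [CommSemiring R] (B : Matrix ι κ R) (S : Matrix α μ R)
    (C : Matrix κ ι R) (C₁ : Matrix μ α R) :
    treeStep B S * (treeStep Cᵀ C₁ᵀ)ᵀ = 1 ⊗ₖ (B * C) + (S * C₁).submatrix Prod.fst Prod.fst := by
  rw [treeStep, treeStep, transpose_fromCols, fromCols_mul_fromRows, ← kroneckerMap_transpose,
    transpose_one, transpose_transpose, ← mul_kronecker_mul, mul_one, transpose_submatrix,
    transpose_transpose, submatrix_mul _ _ _ id _ Function.bijective_id]

lemma sum_sq_treeStep_apply (U : Matrix ι κ ℝ) (V : Matrix α μ ℝ) (a : α) (i : ι) :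
    ∑ j, treeStep U V (a, i) j ^ 2 = ∑ k, U i k ^ 2 + ∑ c, V a c ^ 2 := by
  simp [treeStep, Fintype.sum_sum_type, Fintype.sum_prod_type, kroneckerMap_apply, one_apply]

lemma maxRowNorm_treeStep [Fintype ι] [Nonempty α] [Nonempty ι] (U : Matrix ι κ ℝ)
    (V : Matrix α μ ℝ) :
    maxRowNorm (treeStep U V) = √(maxRowNorm U ^ 2 + maxRowNorm V ^ 2) := by
  refine le_antisymm (maxRowNorm_le_of_sum_sq_le _ (Real.sqrt_nonneg _) fun ⟨a, i⟩ => ?_) ?_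
  · rw [sum_sq_treeStep_apply, Real.sq_sqrt (by positivity)]
    exact add_le_add (sum_sq_le_maxRowNorm_sq U i) (sum_sq_le_maxRowNorm_sq V a)
  · obtain ⟨i, hi⟩ := exists_sqrt_sum_sq_eq_maxRowNorm U
    obtain ⟨a, ha⟩ := exists_sqrt_sum_sq_eq_maxRowNorm V
    rw [← hi, ← ha, Real.sq_sqrt (by positivity), Real.sq_sqrt (by positivity),
      ← sum_sq_treeStep_apply]
    exact sqrt_sum_sq_le_maxRowNorm _ (a, i)

end TreeStep

section Shift

variable {R κ : Type*} {m : ℕ}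

def shiftRows [Zero R] (B : Matrix (Fin (m + 1)) κ R) : Matrix (Fin (m + 1)) κ R :=
  of (Fin.cons 0 fun r => B r.castSucc)

def strictLowerOnes (n : ℕ) : Matrix (Fin n) (Fin n) ℝ :=
  of fun i j => if j < i then 1 else 0

lemma shiftRows_mul_eq_strictLowerOnes [Fintype κ] {B : Matrix (Fin (m + 1)) κ ℝ}
    {C : Matrix κ (Fin (m + 1)) ℝ} (hBC : B * C = allOnesLT (m + 1)) :
    shiftRows B * C = strictLowerOnes (m + 1) := by
  ext q j
  cases q using Fin.cases with
  | zero => simp [shiftRows, strictLowerOnes, mul_apply]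
  | succ r =>
    have h := congrFun₂ hBC r.castSucc j
    simp only [mul_apply, allOnesLT, of_apply] at h
    simp only [shiftRows, strictLowerOnes, mul_apply, of_apply, Fin.cons_succ, h]
    simp [Fin.lt_def]

lemma maxRowNorm_shiftRows_le [Fintype κ] (B : Matrix (Fin (m + 1)) κ ℝ) :
    maxRowNorm (shiftRows B) ≤ maxRowNorm B := by
  refine maxRowNorm_le_of_sum_sq_le _ (maxRowNorm_nonneg B) fun q => ?_
  cases q using Fin.cases with
  | zero => simpa [shiftRows] using sq_nonneg (maxRowNorm B)
  | succ r => simpa [shiftRows] using sum_sq_le_maxRowNorm_sq B r.castSucc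

end Shift

lemma add_mul_le_add_mul_iff {N a b i j : ℕ} (hi : i < N) (hj : j < N) :
    j + N * b ≤ i + N * a ↔ b < a ∨ b = a ∧ j ≤ i := by
  rcases lt_trichotomy b a with hba | rfl | hab
  · have : N * b + N ≤ N * a := Nat.mul_succ N b ▸ Nat.mul_le_mul_left N hba
    exact iff_of_true (by linarith) (Or.inl hba)
  · simp
  · have : N * a + N ≤ N * b := Nat.mul_succ N a ▸ Nat.mul_le_mul_left N hab
    exact iff_of_false (by linarith) (by omega)

lemma one_kronecker_allOnesLT_add_strictLowerOnes (n N : ℕ) :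
    1 ⊗ₖ allOnesLT N + (strictLowerOnes n).submatrix Prod.fst Prod.fst =
      (allOnesLT (n * N)).submatrix finProdFinEquiv finProdFinEquiv := by
  ext ⟨a, i⟩ ⟨b, j⟩
  simp only [allOnesLT, strictLowerOnes, Matrix.add_apply, kronecker_apply, submatrix_apply,
    of_apply, one_apply, finProdFinEquiv_apply_val, add_mul_le_add_mul_iff i.isLt j.isLt,
    Fin.lt_def, Fin.ext_iff]
  split_ifs <;> first | omega | norm_num

lemma exists_factorization_step {N M m k : ℕ} [NeZero N] (B : Matrix (Fin N) (Fin M) ℝ)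
    (C : Matrix (Fin M) (Fin N) ℝ) (hBC : B * C = allOnesLT N) (B₁ : Matrix (Fin (m + 1)) (Fin k) ℝ)
    (C₁ : Matrix (Fin k) (Fin (m + 1)) ℝ) (hBC₁ : B₁ * C₁ = allOnesLT (m + 1)) :
    ∃ (B' : Matrix (Fin ((m + 1) * N)) (Fin ((m + 1) * M + k)) ℝ)
      (C' : Matrix (Fin ((m + 1) * M + k)) (Fin ((m + 1) * N)) ℝ),
      B' * C' = allOnesLT ((m + 1) * N) ∧
      maxRowNorm B' ≤ √(maxRowNorm B ^ 2 + maxRowNorm B₁ ^ 2) ∧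
      maxColNorm C' = √(maxColNorm C ^ 2 + maxColNorm C₁ ^ 2) := by
  let eRow : Fin ((m + 1) * N) ≃ Fin (m + 1) × Fin N := finProdFinEquiv.symm
  let eCol : Fin ((m + 1) * M + k) ≃ (Fin (m + 1) × Fin M) ⊕ Fin k :=
    finSumFinEquiv.symm.trans (finProdFinEquiv.symm.sumCongr (Equiv.refl _))
  refine ⟨(treeStep B (shiftRows B₁)).submatrix eRow eCol,
    (treeStep Cᵀ C₁ᵀ)ᵀ.submatrix eCol eRow, ?_, ?_, ?_⟩
  · rw [submatrix_mul_equiv, treeStep_mul_transpose_treeStep, hBC,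
      shiftRows_mul_eq_strictLowerOnes hBC₁, one_kronecker_allOnesLT_add_strictLowerOnes]
    simp [eRow]
  · rw [maxRowNorm_submatrix_equiv, maxRowNorm_treeStep]
    gcongr
    exacts [maxRowNorm_nonneg _, maxRowNorm_shiftRows_le B₁]
  · rw [maxColNorm_eq_maxRowNorm_transpose, transpose_submatrix, transpose_transpose,
      maxRowNorm_submatrix_equiv, maxRowNorm_treeStep]
    rfl

lemma sqrt_sq_sqrt_mul_add_sq (ℓ : ℕ) {c : ℝ} (hc : 0 ≤ c) :
    √((√ℓ * c) ^ 2 + c ^ 2) = √(ℓ + 1 : ℕ) * c := by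
  rw [mul_pow, Real.sq_sqrt (Nat.cast_nonneg ℓ), ← add_one_mul, Real.sqrt_mul (by positivity),
    Real.sqrt_sq hc]
  push_cast
  rfl

theorem recursive_factorization_general (n₁ n₁' : ℕ) (hn₁ : 2 ≤ n₁)
    (B₁ : Matrix (Fin n₁) (Fin n₁') ℝ) (C₁ : Matrix (Fin n₁') (Fin n₁) ℝ)
    (hBC : B₁ * C₁ = allOnesLT n₁) :
    ∀ ℓ : ℕ, 1 ≤ ℓ →
      ∃ (B : Matrix (Fin (n₁ ^ ℓ)) (Fin (n₁' * ∑ k ∈ Finset.range ℓ, n₁ ^ k)) ℝ)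
        (C : Matrix (Fin (n₁' * ∑ k ∈ Finset.range ℓ, n₁ ^ k)) (Fin (n₁ ^ ℓ)) ℝ),
        B * C = allOnesLT (n₁ ^ ℓ) ∧
        maxRowNorm B ≤ Real.sqrt ℓ * maxRowNorm B₁ ∧
        maxColNorm C = Real.sqrt ℓ * maxColNorm C₁ := by
  obtain ⟨m, rfl⟩ : ∃ m, n₁ = m + 1 := ⟨n₁ - 1, by omega⟩
  intro ℓ hℓ
  induction ℓ, hℓ using Nat.le_induction with
  | base =>
    rw [pow_one, Finset.sum_range_one, pow_zero, mul_one]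
    exact ⟨B₁, C₁, hBC, by simp, by simp⟩
  | succ ℓ _ ih =>
    obtain ⟨B, C, hBC', hB, hC⟩ := ih
    have hrows : (m + 1) ^ (ℓ + 1) = (m + 1) * (m + 1) ^ ℓ := pow_succ' _ _
    have hcols : n₁' * ∑ k ∈ Finset.range (ℓ + 1), (m + 1) ^ k =
        (m + 1) * (n₁' * ∑ k ∈ Finset.range ℓ, (m + 1) ^ k) + n₁' := by
      rw [geom_sum_succ]; ring
    rw [hrows, hcols]
    obtain ⟨B', C', hBC'', hB', hC'⟩ := exists_factorization_step B C hBC' B₁ C₁ hBC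
    refine ⟨B', C', hBC'', hB'.trans ?_, hC'.trans ?_⟩
    · rw [← sqrt_sq_sqrt_mul_add_sq ℓ (maxRowNorm_nonneg B₁)]
      gcongr
      exact maxRowNorm_nonneg B
    · rw [hC]
      exact sqrt_sq_sqrt_mul_add_sq ℓ (maxRowNorm_nonneg C₁ᵀ)

/-- Recursive factorization: from a base factorization `B₁ C₁ = A⁽ⁿ¹⁾` with
`B₁, C₁ᵀ ∈ ℝ^{n₁ × n₁'}`, for every `ℓ ≥ 1` there is a factorization
`B C = A^{(n₁^ℓ)}` with `B, Cᵀ ∈ ℝ^{n₁^ℓ × n₁' ∑_{k<ℓ} n₁^k}`,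
`‖B‖_{2→∞} ≤ √ℓ ‖B₁‖_{2→∞}` and `‖C‖_{1→2} = √ℓ ‖C₁‖_{1→2}`. -/
theorem recursive_factorization (n₁ n₁' : ℕ) (hn₁ : 2 ≤ n₁) (hn₁' : 1 ≤ n₁')
    (B₁ : Matrix (Fin n₁) (Fin n₁') ℝ) (C₁ : Matrix (Fin n₁') (Fin n₁) ℝ)
    (hBC : B₁ * C₁ = allOnesLT n₁) :
    ∀ ℓ : ℕ, 1 ≤ ℓ →
      ∃ (B : Matrix (Fin (n₁ ^ ℓ)) (Fin (n₁' * ∑ k ∈ Finset.range ℓ, n₁ ^ k)) ℝ)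
        (C : Matrix (Fin (n₁' * ∑ k ∈ Finset.range ℓ, n₁ ^ k)) (Fin (n₁ ^ ℓ)) ℝ),
        B * C = allOnesLT (n₁ ^ ℓ) ∧
        maxRowNorm B ≤ Real.sqrt ℓ * maxRowNorm B₁ ∧
        maxColNorm C = Real.sqrt ℓ * maxColNorm C₁ :=
  recursive_factorization_general n₁ n₁' hn₁ B₁ C₁ hBC
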